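/- arXiv:2604.08327 — 3 statements merged into one kernel-verified Lean document; each statement's English description precedes it below -/
import Mathlib

section
/- Suppose 0 < c₁ < 2 and c₂ < c₁ − 2·(1 − log(2/c₁)). Then there exist real numbers t̲ and t̄ with 0 ≤ t̲ < t* < t̄, where t* = (2/D)·log(2/c₁), such that h(t̲) = h(t̄) = 0 and, for every t ≥ 0, h(t) ≤ 0 if and only if t̲ ≤ t ≤ t̄. -/
/-!
`h` is `exp` of a linear function minus an affine one, hence strictly convex, and it tends to
`+∞`. Its minimum is attained at `t*` (where `h' = 0`), and the hypothesis on `c₂` says exactly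
that `h t* < 0`, while `h 0 = c₂ / c₁ ≥ 0`. The intermediate value theorem gives a zero on each
side of `t*`, and strict convexity makes `{h ≤ 0}` exactly the interval between them.
-/

open Real Set Filter

theorem StrictConvexOn.le_iff_mem_Icc_of_eq {f : ℝ → ℝ} (hf : StrictConvexOn ℝ univ f)
    {a b c : ℝ} (hab : a < b) (ha : f a = c) (hb : f b = c) (t : ℝ) :
    f t ≤ c ↔ t ∈ Icc a b := by
  refine ⟨fun ht => ⟨le_of_not_gt fun hta => ?_, le_of_not_gt fun hbt => ?_⟩, fun ht => ?_⟩
  · have hlt := hf.lt_on_openSegment (mem_univ t) (mem_univ b) (hta.trans hab).ne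
      (by rw [openSegment_eq_Ioo (hta.trans hab)]; exact ⟨hta, hab⟩)
    rw [ha, hb] at hlt
    exact hlt.not_ge (max_le ht le_rfl)
  · have hlt := hf.lt_on_openSegment (mem_univ a) (mem_univ t) (hab.trans hbt).ne
      (by rw [openSegment_eq_Ioo (hab.trans hbt)]; exact ⟨hab, hbt⟩)
    rw [ha, hb] at hlt
    exact hlt.not_ge (max_le le_rfl ht)
  · have hle := hf.convexOn.le_on_segment (mem_univ a) (mem_univ b)
      (by rwa [segment_eq_Icc hab.le])
    rwa [ha, hb, max_self] at hle

theorem StrictConvexOn.exists_nonpos_iff_mem_Icc {f : ℝ → ℝ} (hf : StrictConvexOn ℝ univ f)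
    (hcont : Continuous f) (htop : Tendsto f atTop atTop) {a s : ℝ} (has : a ≤ s)
    (ha : 0 ≤ f a) (hs : f s < 0) :
    ∃ l u, a ≤ l ∧ l < s ∧ s < u ∧ f l = 0 ∧ f u = 0 ∧ ∀ t, f t ≤ 0 ↔ t ∈ Icc l u := by
  obtain ⟨l, ⟨hal, hls⟩, hl⟩ := intermediate_value_Icc' has hcont.continuousOn ⟨hs.le, ha⟩
  obtain ⟨T, hT, hsT⟩ := ((htop.eventually_gt_atTop 0).and (eventually_ge_atTop s)).exists
  obtain ⟨u, ⟨hsu, huT⟩, hu⟩ := intermediate_value_Icc hsT hcont.continuousOn ⟨hs.le, hT.le⟩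
  have hls' : l < s := hls.lt_of_ne (by rintro rfl; linarith)
  have hsu' : s < u := hsu.lt_of_ne (by rintro rfl; linarith)
  exact ⟨l, u, hal, hls', hsu', hl, hu, hf.le_iff_mem_Icc_of_eq (hls'.trans hsu') hl hu⟩

section ExpAffine

variable {a : ℝ} (b c : ℝ)

theorem strictConvexOn_exp_mul_add_affine (ha : a ≠ 0) :
    StrictConvexOn ℝ univ fun t => Real.exp (a * t) + (b * t + c) := by
  have hexp : StrictConvexOn ℝ univ fun t => Real.exp (a * t) :=
    (image_univ_of_surjective (mul_left_surjective₀ ha) ▸ strictConvexOn_exp).comp_convexOn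
      ((LinearMap.mulLeft ℝ a).convexOn convex_univ)
      (exp_monotone.monotoneOn _) ((mul_right_injective₀ ha).injOn)
  exact hexp.add_convexOn (((LinearMap.mulLeft ℝ b).convexOn convex_univ).add_const c)

theorem tendsto_exp_mul_add_affine_atTop (ha : 0 < a) :
    Tendsto (fun t => Real.exp (a * t) + (b * t + c)) atTop atTop := by
  have hlim := (((tendsto_exp_mul_div_rpow_atTop 1 a ha).atTop_add
    (tendsto_const_nhds (x := b))).atTop_mul_atTop₀ tendsto_id).atTop_add
    (tendsto_const_nhds (x := c))
  refine hlim.congr' ?_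
  filter_upwards [eventually_gt_atTop 0] with t ht
  simp only [rpow_one, id]
  field_simp
  ring

end ExpAffine

theorem h_nonpositive_interval
    (D c₁ c₂ : ℝ) (hD : 0 < D) (hc₁ : 0 < c₁) (hc₂ : 0 ≤ c₂)
    (h : ℝ → ℝ) (hh : ∀ t, h t = Real.exp (t * D / 2) - 1 - (t * D - c₂) / c₁)
    (hc₁2 : c₁ < 2)
    (hcond : c₂ < c₁ - 2 * (1 - Real.log (2 / c₁)))
    (tstar : ℝ) (htstar : tstar = (2 / D) * Real.log (2 / c₁)) :
    ∃ tlow thigh : ℝ, 0 ≤ tlow ∧ tlow < tstar ∧ tstar < thigh ∧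
      h tlow = 0 ∧ h thigh = 0 ∧
      ∀ t : ℝ, 0 ≤ t → (h t ≤ 0 ↔ tlow ≤ t ∧ t ≤ thigh) := by
  have hform : h = fun t => Real.exp (D / 2 * t) + (-(D / c₁) * t + (c₂ / c₁ - 1)) := by
    funext t; rw [hh]; ring_nf
  have hconv : StrictConvexOn ℝ univ h :=
    hform ▸ strictConvexOn_exp_mul_add_affine _ _ (half_pos hD).ne'
  have hcont : Continuous h := by rw [hform]; fun_prop
  have htop : Tendsto h atTop atTop := hform ▸ tendsto_exp_mul_add_affine_atTop _ _ (half_pos hD)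
  have hlog : 0 < log (2 / c₁) := log_pos (by rw [lt_div_iff₀ hc₁]; linarith)
  have htstar_nonneg : 0 ≤ tstar := by rw [htstar]; positivity
  have h_zero : 0 ≤ h 0 := by
    rw [hh, zero_mul, zero_div, exp_zero, sub_self, zero_sub, zero_sub, neg_div, neg_neg]
    positivity
  have h_tstar : h tstar < 0 := by
    have hexp : exp (tstar * D / 2) = 2 / c₁ := by
      rw [htstar, show 2 / D * log (2 / c₁) * D / 2 = log (2 / c₁) by field_simp,
        exp_log (by positivity)]
    rw [hh, hexp, htstar, show 2 / c₁ - 1 - (2 / D * log (2 / c₁) * D - c₂) / c₁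
      = (c₂ - (c₁ - 2 * (1 - log (2 / c₁)))) / c₁ by field_simp; ring]
    exact div_neg_of_neg_of_pos (by linarith) hc₁
  obtain ⟨l, u, hl0, hls, hsu, hl, hu, hIcc⟩ :=
    hconv.exists_nonpos_iff_mem_Icc hcont htop htstar_nonneg h_zero h_tstar
  exact ⟨l, u, hl0, hls, hsu, hl, hu, fun t _ => hIcc t⟩
end

section
/- If there exists some t ≥ 0 with h(t) < 0, then necessarily c₁ < 2 and c₂ < c₁ − 2·(1 − log(2/c₁)). -/
theorem h_negative_necessary_conditions
    (D c₁ c₂ : ℝ) (hD : 0 < D) (hc₁ : 0 < c₁) (hc₂ : 0 ≤ c₂)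
    (h : ℝ → ℝ) (hh : ∀ t, h t = Real.exp (t * D / 2) - 1 - (t * D - c₂) / c₁)
    (hneg : ∃ t : ℝ, 0 ≤ t ∧ h t < 0) :
    c₁ < 2 ∧ c₂ < c₁ - 2 * (1 - Real.log (2 / c₁)) := by
  obtain ⟨t, ht, hneg⟩ := hneg
  rw [hh] at hneg
  have h1 : Real.exp (t * D / 2) - 1 < (t * D - c₂) / c₁ := by linarith
  have h2 : (Real.exp (t * D / 2) - 1) * c₁ < t * D - c₂ :=
    (lt_div_iff₀ hc₁).mp h1
  -- key: c₂ < c₁ + t*D - c₁ * exp(t*D/2)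
  have key : c₂ < c₁ + t * D - c₁ * Real.exp (t * D / 2) := by nlinarith
  have hexp : t * D / 2 + 1 ≤ Real.exp (t * D / 2) := Real.add_one_le_exp _
  have htD : 0 ≤ t * D := mul_nonneg ht hD.le
  have htDpos : 0 < t * D := by
    rcases htD.lt_or_eq with h' | h'
    · exact h'
    · exfalso
      rw [← h'] at key
      simp at key
      linarith
  have hc1lt2 : c₁ < 2 := by nlinarith
  refine ⟨hc1lt2, ?_⟩
  set L := Real.log (2 / c₁) with hL
  have hexpL : Real.exp L = 2 / c₁ := Real.exp_log (by positivity)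
  have h3 : t * D / 2 - L + 1 ≤ Real.exp (t * D / 2 - L) := Real.add_one_le_exp _
  have h4 : Real.exp (t * D / 2 - L) * Real.exp L = Real.exp (t * D / 2) := by
    rw [← Real.exp_add]; ring_nf
  have h5 : (t * D / 2 - L + 1) * (2 / c₁) ≤ Real.exp (t * D / 2) := by
    rw [← h4, ← hexpL]
    exact mul_le_mul_of_nonneg_right h3 (Real.exp_pos L).le
  have h6 : c₁ * Real.exp (t * D / 2) ≥ (t * D / 2 - L + 1) * 2 := by
    have := mul_le_mul_of_nonneg_left h5 hc₁.le
    calc (t * D / 2 - L + 1) * 2 = c₁ * ((t * D / 2 - L + 1) * (2 / c₁)) := by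
          field_simp
      _ ≤ c₁ * Real.exp (t * D / 2) := this
  nlinarith
end

section
/- Let d be a natural number, f : ℝ^d → ℝ^d a Lipschitz map with Lipschitz constant D_f with respect to the ∞-norm, and x : ℝ → ℝ^d a continuous function with x(0) = x₀. Then for every x_tg ∈ ℝ^d and every t ≥ 0, ‖∫₀ᵗ f(x(τ)) dτ‖_∞ ≤ t·(‖f(x₀)‖_∞ + D_f·‖x_tg − x₀‖_∞) + D_f·∫₀ᵗ ‖x_tg − x(τ)‖_∞ dτ. -/
lemma norm_apply_le_of_norm_sub_le_mul {E F : Type*} [NormedAddCommGroup E]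
    [SeminormedAddCommGroup F] {f : E → F} {K : ℝ} (hf : ∀ a b, ‖f a - f b‖ ≤ K * ‖a - b‖)
    (y x₀ z : E) : ‖f y‖ ≤ ‖f x₀‖ + K * ‖z - x₀‖ + K * ‖z - y‖ := by
  rcases le_or_gt 0 K with hK | hK
  · have htriangle : ‖y - x₀‖ ≤ ‖z - x₀‖ + ‖z - y‖ := by
      simpa using norm_sub_le (z - x₀) (z - y)
    calc ‖f y‖ ≤ ‖f x₀‖ + ‖f y - f x₀‖ := norm_le_insert' _ _
      _ ≤ ‖f x₀‖ + K * ‖y - x₀‖ := by gcongr; exact hf y x₀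
      _ ≤ ‖f x₀‖ + K * ‖z - x₀‖ + K * ‖z - y‖ := by nlinarith
  · -- a negative constant forces `E` to be a single point
    have hpoint : ∀ a b : E, a = b := fun a b => by
      have := hf a b
      rw [← sub_eq_zero, ← norm_le_zero_iff]
      nlinarith [norm_nonneg (f a - f b), norm_nonneg (a - b)]
    obtain rfl := hpoint x₀ y
    obtain rfl := hpoint z x₀
    simp

theorem drift_term_estimate_general
    (d : ℕ)
    (f : (Fin d → ℝ) → (Fin d → ℝ))
    (D_f : ℝ)
    (hf_lip : ∀ a b : Fin d → ℝ, ‖f a - f b‖ ≤ D_f * ‖a - b‖)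
    (x : ℝ → Fin d → ℝ) (hx_cont : Continuous x)
    (x₀ : Fin d → ℝ) :
    ∀ (x_tg : Fin d → ℝ) (t : ℝ), 0 ≤ t →
      ‖∫ τ in (0 : ℝ)..t, f (x τ)‖ ≤
        t * (‖f x₀‖ + D_f * ‖x_tg - x₀‖) +
          D_f * ∫ τ in (0 : ℝ)..t, ‖x_tg - x τ‖ := by
  intro x_tg t ht
  have hdist : IntervalIntegrable (fun τ => D_f * ‖x_tg - x τ‖) MeasureTheory.volume 0 t :=
    (continuous_const.mul (continuous_const.sub hx_cont).norm).intervalIntegrable 0 t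
  calc ‖∫ τ in (0 : ℝ)..t, f (x τ)‖
      ≤ ∫ τ in (0 : ℝ)..t, (‖f x₀‖ + D_f * ‖x_tg - x₀‖ + D_f * ‖x_tg - x τ‖) :=
        intervalIntegral.norm_integral_le_of_norm_le ht
          (.of_forall fun τ _ => norm_apply_le_of_norm_sub_le_mul hf_lip (x τ) x₀ x_tg)
          (intervalIntegrable_const.add hdist)
    _ = t * (‖f x₀‖ + D_f * ‖x_tg - x₀‖) + D_f * ∫ τ in (0 : ℝ)..t, ‖x_tg - x τ‖ := by
        rw [intervalIntegral.integral_add intervalIntegrable_const hdist,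
          intervalIntegral.integral_const, intervalIntegral.integral_const_mul, smul_eq_mul,
          sub_zero]

theorem drift_term_estimate
    (d : ℕ)
    (f : (Fin d → ℝ) → (Fin d → ℝ))
    (D_f : ℝ)
    (hf_lip : ∀ a b : Fin d → ℝ, ‖f a - f b‖ ≤ D_f * ‖a - b‖)
    (x : ℝ → Fin d → ℝ) (hx_cont : Continuous x)
    (x₀ : Fin d → ℝ) (hx0 : x 0 = x₀) :
    ∀ (x_tg : Fin d → ℝ) (t : ℝ), 0 ≤ t →
      ‖∫ τ in (0 : ℝ)..t, f (x τ)‖ ≤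
        t * (‖f x₀‖ + D_f * ‖x_tg - x₀‖) +
          D_f * ∫ τ in (0 : ℝ)..t, ‖x_tg - x τ‖ :=
  drift_term_estimate_general d f D_f hf_lip x hx_cont x₀
end
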